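/- For every prime p with p ≡ 1 (mod 3), the unique triple (x,y,z) ∈ ℕ³ with 0 ≤ x ≤ y ≤ z, z ≥ x + 1 and F(x,y,z) = 2p is given by x = (2p−2)/3 and y = z = (2p+1)/3; and for every prime p with p ≡ 2 (mod 3), the unique such triple is given by x = y = (2p−1)/3 and z = (2p+2)/3. -/
import Mathlib


def F (x y z : ℕ) : ℤ :=
  (x : ℤ) ^ 3 + (y : ℤ) ^ 3 + (z : ℤ) ^ 3 - 3 * (x : ℤ) * (y : ℤ) * (z : ℤ)

lemma F_key (x a b : ℕ) :
    F x (x + a) (x + a + b) = ((3 * x + 2 * a + b) * (a ^ 2 + a * b + b ^ 2) : ℕ) := by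
  simp only [F]; push_cast; ring

lemma F_main (p : ℕ) (hp : p.Prime) (x y z : ℕ) (hxy : x ≤ y) (hyz : y ≤ z)
    (hxz : x + 1 ≤ z) (hF : F x y z = 2 * p) :
    (p % 3 = 1 ∧ 3 * x + 2 = 2 * p ∧ y = x + 1 ∧ z = x + 1) ∨
    (p % 3 = 2 ∧ 3 * x + 1 = 2 * p ∧ y = x ∧ z = x + 1) := by
  obtain ⟨a, rfl⟩ := Nat.exists_eq_add_of_le hxy
  obtain ⟨b, rfl⟩ := Nat.exists_eq_add_of_le hyz
  rw [F_key] at hF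
  have hF' : (3 * x + 2 * a + b) * (a ^ 2 + a * b + b ^ 2) = 2 * p := by exact_mod_cast hF
  have hp2 := hp.two_le
  have hab : 1 ≤ a + b := by omega
  have hdvd : p ∣ (3 * x + 2 * a + b) * (a ^ 2 + a * b + b ^ 2) := ⟨2, by omega⟩
  have hqpos : 1 ≤ a ^ 2 + a * b + b ^ 2 := by nlinarith
  have hq1 : a ^ 2 + a * b + b ^ 2 = 1 ∧ 3 * x + 2 * a + b = 2 * p := by
    rcases (Nat.Prime.dvd_mul hp).mp hdvd with hs | hq
    · -- p divides s
      obtain ⟨m, hm⟩ := hs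
      have hmq : m * (a ^ 2 + a * b + b ^ 2) = 2 := by
        have h : p * (m * (a ^ 2 + a * b + b ^ 2)) = p * 2 := by
          rw [← mul_assoc, ← hm]; omega
        exact Nat.eq_of_mul_eq_mul_left (by omega) h
      have hm2 : m ≤ 2 := Nat.le_of_dvd (by norm_num) ⟨_, hmq.symm⟩
      interval_cases m
      · omega
      · -- m = 1, q = 2 : impossible
        exfalso
        have ha : a ≤ 1 := by nlinarith
        have hb : b ≤ 1 := by nlinarith
        interval_cases a <;> interval_cases b <;> omega
      · -- m = 2, q = 1
        exact ⟨by omega, by omega⟩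
    · -- p divides q
      exfalso
      obtain ⟨m, hm⟩ := hq
      have hsm : (3 * x + 2 * a + b) * m = 2 := by
        have h : p * ((3 * x + 2 * a + b) * m) = p * 2 := by
          have : (3 * x + 2 * a + b) * (p * m) = 2 * p := by rw [← hm]; exact hF'
          calc p * ((3 * x + 2 * a + b) * m) = (3 * x + 2 * a + b) * (p * m) := by ring
            _ = 2 * p := this
            _ = p * 2 := by ring
        exact Nat.eq_of_mul_eq_mul_left (by omega) h
      have hs2 : 3 * x + 2 * a + b = 1 ∨ 3 * x + 2 * a + b = 2 := by
        have hd : (3 * x + 2 * a + b) ∣ 2 := ⟨m, hsm.symm⟩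
        have := Nat.le_of_dvd (by norm_num) hd
        omega
      rcases hs2 with h | h
      · -- s = 1: x = 0, a = 0, b = 1, q = 1 = p*m, so p = 1
        have hx : x = 0 ∧ a = 0 ∧ b = 1 := by omega
        obtain ⟨hx0, ha0, hb1⟩ := hx
        subst hx0; subst ha0; subst hb1
        have h1 : p * m = 1 := by simpa using hm.symm
        have := Nat.le_of_dvd one_pos ⟨m, h1.symm⟩
        omega
      · -- s = 2: x = 0 and (a=1,b=0) or (a=0,b=2)
        have hx : x = 0 ∧ ((a = 1 ∧ b = 0) ∨ (a = 0 ∧ b = 2)) := by omega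
        obtain ⟨hx0, hab2⟩ := hx
        subst hx0
        rcases hab2 with ⟨ha1, hb0⟩ | ⟨ha0, hb2⟩
        · subst ha1; subst hb0
          have h1 : p * m = 1 := by simpa using hm.symm
          have := Nat.le_of_dvd one_pos ⟨m, h1.symm⟩
          omega
        · subst ha0; subst hb2
          norm_num at hm
          have hm1 : m = 1 := by omega
          subst hm1
          norm_num at hm
          subst hm
          norm_num at hp
  obtain ⟨hq, hs⟩ := hq1
  have ha : a ≤ 1 := by nlinarith
  have hb : b ≤ 1 := by nlinarith
  interval_cases a <;> interval_cases b <;> (try norm_num at hq) <;> omega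

theorem stmt_19 (p : ℕ) (hp : p.Prime) :
    (p % 3 = 1 → ∀ x y z : ℕ,
      (x ≤ y ∧ y ≤ z ∧ x + 1 ≤ z ∧ F x y z = 2 * p) ↔
      (x = (2 * p - 2) / 3 ∧ y = (2 * p + 1) / 3 ∧ z = (2 * p + 1) / 3)) ∧
    (p % 3 = 2 → ∀ x y z : ℕ,
      (x ≤ y ∧ y ≤ z ∧ x + 1 ≤ z ∧ F x y z = 2 * p) ↔
      (x = (2 * p - 1) / 3 ∧ y = (2 * p - 1) / 3 ∧ z = (2 * p + 2) / 3)) := by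
  have hp2 := hp.two_le
  constructor
  · intro h1 x y z
    constructor
    · rintro ⟨hxy, hyz, hxz, hF⟩
      rcases F_main p hp x y z hxy hyz hxz hF with ⟨_, hs, hy, hz⟩ | ⟨h2, _, _, _⟩
      · exact ⟨by omega, by omega, by omega⟩
      · omega
    · rintro ⟨hx, hy, hz⟩
      have hy' : y = x + 1 := by omega
      have hz' : z = x + 1 := by omega
      have hs : 3 * x + 2 = 2 * p := by omega
      refine ⟨by omega, by omega, by omega, ?_⟩
      have hsz : ((3:ℤ) * x + 2) = 2 * p := by exact_mod_cast hs
      rw [hy', hz']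
      simp only [F]; push_cast
      linear_combination hsz
  · intro h2 x y z
    constructor
    · rintro ⟨hxy, hyz, hxz, hF⟩
      rcases F_main p hp x y z hxy hyz hxz hF with ⟨h1, _, _, _⟩ | ⟨_, hs, hy, hz⟩
      · omega
      · exact ⟨by omega, by omega, by omega⟩
    · rintro ⟨hx, hy, hz⟩
      have hy' : y = x := by omega
      have hz' : z = x + 1 := by omega
      have hs : 3 * x + 1 = 2 * p := by omega
      refine ⟨by omega, by omega, by omega, ?_⟩
      have hsz : ((3:ℤ) * x + 1) = 2 * p := by exact_mod_cast hs
      rw [hy', hz']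
      simp only [F]; push_cast
      linear_combination hsz
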